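/- Let H₁ = H₂ = ℂ², ρ₁ = ρ₂ = I/2, and A = (1/3)(2|00⟩⟨00| + |01⟩⟨01| + |10⟩⟨10| + 2|11⟩⟨11| + |00⟩⟨11| + |11⟩⟨00|). Then the maximum of tr(Aρ) over all couplings ρ of (ρ₁, ρ₂) equals 1 (achieved by the maximally entangled Bell state), while the maximum of tr(Aσ) over all separable couplings σ of (ρ₁, ρ₂) equals 2/3. -/

import Mathlib

open Matrix
open scoped ComplexOrder Kronecker

noncomputable section

def ptr2 {n m : Type*} [Fintype m] (ρ : Matrix (n × m) (n × m) ℂ) : Matrix n n ℂ :=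
  Matrix.of fun i j => ∑ k, ρ (i, k) (j, k)

def ptr1 {n m : Type*} [Fintype n] (ρ : Matrix (n × m) (n × m) ℂ) : Matrix m m ℂ :=
  Matrix.of fun i j => ∑ k, ρ (k, i) (k, j)

def Separable {n m : Type*} [Fintype n] [Fintype m]
    (ρ : Matrix (n × m) (n × m) ℂ) : Prop :=
  ∃ (k : ℕ) (a : Fin k → Matrix n n ℂ) (b : Fin k → Matrix m m ℂ),
    (∀ i, (a i).PosSemidef) ∧ (∀ i, (b i).PosSemidef) ∧ ρ = ∑ i, a i ⊗ₖ b i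

/-- A = (1/3)(2|00⟩⟨00| + |01⟩⟨01| + |10⟩⟨10| + 2|11⟩⟨11| + |00⟩⟨11| + |11⟩⟨00|). -/
def Aop : Matrix (Fin 2 × Fin 2) (Fin 2 × Fin 2) ℂ :=
  (1 / 3 : ℂ) • Matrix.of fun p q =>
    if p = q then (if p.1 = p.2 then 2 else 1)
    else if p.1 = p.2 ∧ q.1 = q.2 then 1 else 0

/-! ### Auxiliary lemmas -/

lemma psd_diag_re {n : Type*} [Fintype n] [DecidableEq n] {M : Matrix n n ℂ}
    (hM : M.PosSemidef) (p : n) : 0 ≤ (M p p).re := by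
  have h := hM.dotProduct_mulVec_nonneg (Pi.single p 1)
  rw [Complex.le_def] at h
  simpa [dotProduct, mulVec, Pi.single_apply] using h.1

lemma psd_diag_im {n : Type*} [Fintype n] [DecidableEq n] {M : Matrix n n ℂ}
    (hM : M.PosSemidef) (p : n) : (M p p).im = 0 := by
  have h := congrFun (congrFun hM.1 p) p
  rw [conjTranspose_apply] at h
  have h2 := congrArg Complex.im h
  simp at h2
  linarith

lemma psd_cross {M : Matrix (Fin 2 × Fin 2) (Fin 2 × Fin 2) ℂ} (hM : M.PosSemidef) :
    (M (0,0) (1,1)).re + (M (1,1) (0,0)).re ≤ (M (0,0) (0,0)).re + (M (1,1) (1,1)).re := by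
  have h := hM.dotProduct_mulVec_nonneg (fun p => if p = (0,0) then 1 else if p = (1,1) then -1 else 0)
  rw [Complex.le_def] at h
  have h1 := h.1
  simp [dotProduct, mulVec, Fintype.sum_prod_type, Fin.sum_univ_succ, Prod.ext_iff] at h1
  have e0 : (0 : Fin 2 × Fin 2) = ((0 : Fin 2), (0 : Fin 2)) := rfl
  have e1 : (1 : Fin 2 × Fin 2) = ((1 : Fin 2), (1 : Fin 2)) := rfl
  linarith

lemma psd2_normSq {M : Matrix (Fin 2) (Fin 2) ℂ} (hM : M.PosSemidef) :
    Complex.normSq (M 0 1) ≤ (M 0 0).re * (M 1 1).re := by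
  have hdP : 0 ≤ (M 0 0).re := psd_diag_re hM 0
  have hdD : 0 ≤ (M 1 1).re := psd_diag_re hM 1
  have h10 : M 1 0 = (starRingEnd ℂ) (M 0 1) := by
    have := congrFun (congrFun hM.1 1) 0
    simpa [conjTranspose_apply] using this.symm
  have h00im : (M 0 0).im = 0 := psd_diag_im hM 0
  have hq : ∀ t : ℝ, 0 ≤ t^2 * Complex.normSq (M 0 1) * (M 0 0).re
      + 2 * t * Complex.normSq (M 0 1) + (M 1 1).re := by
    intro t
    have h := hM.dotProduct_mulVec_nonneg ![(t : ℂ) * M 0 1, 1]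
    rw [Complex.le_def] at h
    have h1 := h.1
    simp [dotProduct, mulVec, Fin.sum_univ_succ, h10, Complex.mul_re, Complex.mul_im,
      h00im] at h1
    simp only [Complex.normSq_apply]
    nlinarith [h1]
  set s := Complex.normSq (M 0 1) with hs
  have hs0 : 0 ≤ s := Complex.normSq_nonneg _
  rcases eq_or_lt_of_le hs0 with hse | hsp
  · rw [← hse]; positivity
  · rcases eq_or_lt_of_le hdP with hPe | hPp
    · exfalso
      have ht := hq (-(((M 1 1).re + 1)) / (2 * s))
      rw [← hPe] at ht
      have h2 : (-(((M 1 1).re + 1)) / (2 * s))^2 * s * 0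
          + 2 * (-(((M 1 1).re + 1)) / (2 * s)) * s + (M 1 1).re = -1 := by
        field_simp
        ring
      rw [h2] at ht
      linarith
    · have ht := hq (-(1/(M 0 0).re))
      have h2 : (-(1/(M 0 0).re))^2 * s * (M 0 0).re + 2 * (-(1/(M 0 0).re)) * s + (M 1 1).re
          = (M 1 1).re - s / (M 0 0).re := by
        field_simp
        ring
      rw [h2, sub_nonneg, div_le_iff₀ hPp] at ht
      linarith

lemma kron_term {a b : Matrix (Fin 2) (Fin 2) ℂ} (ha : a.PosSemidef) (hb : b.PosSemidef) :
    (a 0 1 * b 0 1).re + (a 1 0 * b 1 0).re ≤ (a 0 0 * b 1 1).re + (a 1 1 * b 0 0).re := by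
  have ha10 : a 1 0 = (starRingEnd ℂ) (a 0 1) := by
    have := congrFun (congrFun ha.1 1) 0
    simpa [conjTranspose_apply] using this.symm
  have hb10 : b 1 0 = (starRingEnd ℂ) (b 0 1) := by
    have := congrFun (congrFun hb.1 1) 0
    simpa [conjTranspose_apply] using this.symm
  have hna := psd2_normSq ha
  have hnb := psd2_normSq hb
  have haP := psd_diag_re ha 0
  have haQ := psd_diag_re ha 1
  have hbP := psd_diag_re hb 0
  have hbQ := psd_diag_re hb 1
  have hai0 := psd_diag_im ha 0
  have hai1 := psd_diag_im ha 1
  have hbi0 := psd_diag_im hb 0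
  have hbi1 := psd_diag_im hb 1
  rw [ha10, hb10, ← _root_.map_mul (starRingEnd ℂ), Complex.conj_re]
  have hsq : ((a 0 1 * b 0 1).re)^2 ≤ ((a 0 0).re * (a 1 1).re) * ((b 0 0).re * (b 1 1).re) := by
    have h1 : ((a 0 1 * b 0 1).re)^2 ≤ Complex.normSq (a 0 1 * b 0 1) := by
      rw [Complex.normSq_apply]
      nlinarith [sq_nonneg ((a 0 1 * b 0 1).im)]
    have h2 : Complex.normSq (a 0 1 * b 0 1) = Complex.normSq (a 0 1) * Complex.normSq (b 0 1) :=
      map_mul _ _ _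
    calc ((a 0 1 * b 0 1).re)^2 ≤ Complex.normSq (a 0 1) * Complex.normSq (b 0 1) := by
          rw [← h2]; exact h1
      _ ≤ ((a 0 0).re * (a 1 1).re) * ((b 0 0).re * (b 1 1).re) := by
          apply mul_le_mul hna hnb (Complex.normSq_nonneg _)
          positivity
  have e1 : (a 0 0 * b 1 1).re = (a 0 0).re * (b 1 1).re := by
    rw [Complex.mul_re, hai0]; ring
  have e2 : (a 1 1 * b 0 0).re = (a 1 1).re * (b 0 0).re := by
    rw [Complex.mul_re, hai1]; ring
  rw [e1, e2]
  nlinarith [hsq, sq_nonneg ((a 0 0).re * (b 1 1).re - (a 1 1).re * (b 0 0).re),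
    mul_nonneg (mul_nonneg haP hbQ) (mul_nonneg haQ hbP),
    mul_nonneg haP hbQ, mul_nonneg haQ hbP]

lemma traceAop (ρ : Matrix (Fin 2 × Fin 2) (Fin 2 × Fin 2) ℂ) :
    (Aop * ρ).trace = (1/3 : ℂ) * (2 * ρ (0,0) (0,0) + ρ (0,1) (0,1) + ρ (1,0) (1,0)
      + 2 * ρ (1,1) (1,1) + ρ (1,1) (0,0) + ρ (0,0) (1,1)) := by
  simp [Matrix.trace, Matrix.mul_apply, Aop, Fintype.sum_prod_type, Fin.sum_univ_succ,
    Matrix.diag, Prod.ext_iff]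
  ring

/-- The maximum of tr(Aρ) over all couplings of (I/2, I/2) is 1, while over
separable couplings it is 2/3. -/
theorem max_over_couplings :
    (∀ ρ : Matrix (Fin 2 × Fin 2) (Fin 2 × Fin 2) ℂ,
        ρ.PosSemidef → ptr2 ρ = (1 / 2 : ℂ) • 1 → ptr1 ρ = (1 / 2 : ℂ) • 1 →
          ((Aop * ρ).trace).re ≤ 1) ∧
    (∃ ρ : Matrix (Fin 2 × Fin 2) (Fin 2 × Fin 2) ℂ,
        ρ.PosSemidef ∧ ptr2 ρ = (1 / 2 : ℂ) • 1 ∧ ptr1 ρ = (1 / 2 : ℂ) • 1 ∧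
          (Aop * ρ).trace = 1) ∧
    (∀ σ : Matrix (Fin 2 × Fin 2) (Fin 2 × Fin 2) ℂ,
        Separable σ → σ.PosSemidef → ptr2 σ = (1 / 2 : ℂ) • 1 → ptr1 σ = (1 / 2 : ℂ) • 1 →
          ((Aop * σ).trace).re ≤ 2 / 3) ∧
    (∃ σ : Matrix (Fin 2 × Fin 2) (Fin 2 × Fin 2) ℂ,
        Separable σ ∧ σ.PosSemidef ∧ ptr2 σ = (1 / 2 : ℂ) • 1 ∧ ptr1 σ = (1 / 2 : ℂ) • 1 ∧
          (Aop * σ).trace = 2 / 3) := by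
  have h12 : (0:ℂ) ≤ 1/2 := by rw [Complex.le_def]; norm_num
  refine ⟨?_, ?_, ?_, ?_⟩
  · -- part 1
    intro ρ hρ h2 _h1
    have e0 : ρ (0,0) (0,0) + ρ (0,1) (0,1) = 1/2 := by
      have := congrFun (congrFun h2 0) 0
      simpa [ptr2, Fin.sum_univ_succ, Matrix.one_apply] using this
    have e1 : ρ (1,0) (1,0) + ρ (1,1) (1,1) = 1/2 := by
      have := congrFun (congrFun h2 1) 1
      simpa [ptr2, Fin.sum_univ_succ, Matrix.one_apply] using this
    have r0 := congrArg Complex.re e0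
    have r1 := congrArg Complex.re e1
    simp [Complex.add_re] at r0 r1
    have hb := psd_diag_re hρ ((0:Fin 2), (1:Fin 2))
    have hc := psd_diag_re hρ ((1:Fin 2), (0:Fin 2))
    have hcr := psd_cross hρ
    rw [traceAop, Complex.mul_re]
    norm_num [Complex.add_re, Complex.mul_re, Complex.add_im]
    simp only [show ((0:Fin 2),(0:Fin 2)) = (0 : Fin 2 × Fin 2) from rfl,
      show ((1:Fin 2),(1:Fin 2)) = (1 : Fin 2 × Fin 2) from rfl] at hcr hb hc r0 r1 ⊢
    linarith
  · -- part 2: Bell state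
    refine ⟨Matrix.of fun p q =>
        if (p = (0,0) ∨ p = (1,1)) ∧ (q = (0,0) ∨ q = (1,1)) then 1/2 else 0,
      posSemidef_iff_dotProduct_mulVec.mpr ⟨?_, ?_⟩, ?_, ?_, ?_⟩
    · ext p q
      obtain ⟨i, j⟩ := p; obtain ⟨k, l⟩ := q
      fin_cases i <;> fin_cases j <;> fin_cases k <;> fin_cases l <;>
        simp [conjTranspose_apply, Prod.ext_iff]
    · intro x
      have he : (star x) ⬝ᵥ ((Matrix.of fun p q =>
          if (p = (0,0) ∨ p = (1,1)) ∧ (q = (0,0) ∨ q = (1,1)) then (1/2:ℂ) else 0) *ᵥ x)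
          = (1/2:ℂ) * ((starRingEnd ℂ) (x (0,0) + x (1,1)) * (x (0,0) + x (1,1))) := by
        simp [dotProduct, mulVec, Fintype.sum_prod_type, Fin.sum_univ_succ, Prod.ext_iff,
          Complex.star_def, map_add]
        ring
      have hcm : (starRingEnd ℂ) (x (0,0) + x (1,1)) * (x (0,0) + x (1,1))
          = (Complex.normSq (x (0,0) + x (1,1)) : ℝ) := by
        rw [mul_comm, Complex.mul_conj]
      rw [he, hcm, Complex.le_def]
      constructor
      · simp only [Complex.mul_re, Complex.ofReal_re, Complex.ofReal_im, Complex.zero_re]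
        norm_num
        exact Complex.normSq_nonneg _
      · simp [Complex.mul_im]
    · ext i j
      fin_cases i <;> fin_cases j <;>
        simp [ptr2, Fin.sum_univ_succ, Matrix.one_apply, Prod.ext_iff] <;> norm_num
    · ext i j
      fin_cases i <;> fin_cases j <;>
        simp [ptr1, Fin.sum_univ_succ, Matrix.one_apply, Prod.ext_iff] <;> norm_num
    · rw [traceAop]
      norm_num [Prod.ext_iff]
  · -- part 3
    intro σ hsep hσ h2 _h1
    obtain ⟨k, A, B, hA, hB, hsum⟩ := hsep
    have entry : ∀ p q : Fin 2 × Fin 2, σ p q = ∑ i, A i p.1 q.1 * B i p.2 q.2 := by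
      intro p q; rw [hsum]; simp [Matrix.sum_apply]
    have cross : (σ (0,0) (1,1)).re + (σ (1,1) (0,0)).re
        ≤ (σ (0,1) (0,1)).re + (σ (1,0) (1,0)).re := by
      rw [entry (0,0) (1,1), entry (1,1) (0,0), entry (0,1) (0,1), entry (1,0) (1,0)]
      rw [Complex.re_sum, Complex.re_sum, Complex.re_sum, Complex.re_sum]
      rw [← Finset.sum_add_distrib, ← Finset.sum_add_distrib]
      exact Finset.sum_le_sum fun i _ => kron_term (hA i) (hB i)
    have e0 : σ (0,0) (0,0) + σ (0,1) (0,1) = 1/2 := by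
      have := congrFun (congrFun h2 0) 0
      simpa [ptr2, Fin.sum_univ_succ, Matrix.one_apply] using this
    have e1 : σ (1,0) (1,0) + σ (1,1) (1,1) = 1/2 := by
      have := congrFun (congrFun h2 1) 1
      simpa [ptr2, Fin.sum_univ_succ, Matrix.one_apply] using this
    have r0 := congrArg Complex.re e0
    have r1 := congrArg Complex.re e1
    simp [Complex.add_re] at r0 r1
    rw [traceAop, Complex.mul_re]
    norm_num [Complex.add_re, Complex.mul_re, Complex.add_im]
    simp only [show ((0:Fin 2),(0:Fin 2)) = (0 : Fin 2 × Fin 2) from rfl,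
      show ((1:Fin 2),(1:Fin 2)) = (1 : Fin 2 × Fin 2) from rfl] at cross r0 r1 ⊢
    linarith
  · -- part 4
    refine ⟨Matrix.diagonal (fun p : Fin 2 × Fin 2 => if p.1 = p.2 then (1/2:ℂ) else 0),
      ⟨2, ![Matrix.diagonal ![(1/2:ℂ), 0], Matrix.diagonal ![0, (1/2:ℂ)]],
        ![Matrix.diagonal ![(1:ℂ), 0], Matrix.diagonal ![0, (1:ℂ)]], ?_, ?_, ?_⟩,
      ?_, ?_, ?_, ?_⟩
    · intro i
      fin_cases i <;> refine Matrix.PosSemidef.diagonal (fun j => ?_) <;>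
        fin_cases j <;> simp <;> (rw [Complex.le_def]; norm_num)
    · intro i
      fin_cases i <;> refine Matrix.PosSemidef.diagonal (fun j => ?_) <;>
        fin_cases j <;> simp
    · ext p q
      obtain ⟨i, j⟩ := p; obtain ⟨k, l⟩ := q
      fin_cases i <;> fin_cases j <;> fin_cases k <;> fin_cases l <;>
        simp [Matrix.sum_apply, Fin.sum_univ_two, Matrix.kroneckerMap_apply,
          Matrix.diagonal] <;> norm_num <;> decide
    · exact Matrix.PosSemidef.diagonal (fun p => by dsimp only; split <;> [skip; simp] <;> rw [Complex.le_def] <;> norm_num)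
    · ext i j
      fin_cases i <;> fin_cases j <;>
        simp [ptr2, Fin.sum_univ_succ, Matrix.one_apply, Matrix.diagonal, Prod.ext_iff] <;>
        norm_num
    · ext i j
      fin_cases i <;> fin_cases j <;>
        simp [ptr1, Fin.sum_univ_succ, Matrix.one_apply, Matrix.diagonal, Prod.ext_iff] <;>
        norm_num
    · rw [traceAop]
      norm_num [Matrix.diagonal, Prod.ext_iff]
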